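/- For every n ≥ 16 there exists an (n+1)-vertex graph G with two-color Ramsey number r(G) > (1/3)·n·log₂ n, and a vertex v of G such that the graph H obtained by deleting v has Ramsey number r(H) = n. -/

import Mathlib

open Finset

/-- A two-coloring `col` of the edges of `K_N` contains a monochromatic copy of `G` in color `c`. -/
def HasMonoCopy {V : Type*} {N : ℕ} (G : SimpleGraph V) (col : Sym2 (Fin N) → Bool)
    (c : Bool) : Prop :=
  ∃ f : V → Fin N, Function.Injective f ∧ ∀ u v : V, G.Adj u v → col s(f u, f v) = c

/-- The two-color Ramsey number of a graph `G`. -/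
noncomputable def ramsey {V : Type*} (G : SimpleGraph V) : ℕ :=
  sInf {N | ∀ col : Sym2 (Fin N) → Bool, ∃ c : Bool, HasMonoCopy G col c}

/-- `q`-coloring version of containing a monochromatic copy. -/
def HasMonoCopyMulti {V : Type*} {N q : ℕ} (G : SimpleGraph V) (col : Sym2 (Fin N) → Fin q)
    (c : Fin q) : Prop :=
  ∃ f : V → Fin N, Function.Injective f ∧ ∀ u v : V, G.Adj u v → col s(f u, f v) = c

/-- The `q`-color Ramsey number of a graph `G`. -/
noncomputable def ramseyMulti {V : Type*} (G : SimpleGraph V) (q : ℕ) : ℕ :=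
  sInf {N | ∀ col : Sym2 (Fin N) → Fin q, ∃ c : Fin q, HasMonoCopyMulti G col c}

/-- The `n`-vertex graph consisting of a clique `K_k` together with `n - k` isolated vertices. -/
def Hgraph (k n : ℕ) : SimpleGraph (Fin n) where
  Adj u v := u ≠ v ∧ (u : ℕ) < k ∧ (v : ℕ) < k
  symm := by constructor; rintro u v ⟨h1, h2, h3⟩; exact ⟨h1.symm, h3, h2⟩
  loopless := by constructor; rintro u ⟨h, -⟩; exact h rfl

/-- The `(n+1)`-vertex graph obtained from `Hgraph k n` by adding an apex vertex (the vertex `n`)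
adjacent to all other vertices. -/
def Ggraph (k n : ℕ) : SimpleGraph (Fin (n + 1)) where
  Adj u v := u ≠ v ∧ ((u : ℕ) = n ∨ (v : ℕ) = n ∨ ((u : ℕ) < k ∧ (v : ℕ) < k))
  symm := by constructor; rintro u v ⟨h1, h2⟩; exact ⟨h1.symm, by tauto⟩
  loopless := by constructor; rintro u ⟨h, -⟩; exact h rfl

/-- The disjoint union of `n / k` copies of `K_k` (blocks of `k` consecutive vertices). -/
def Hgraph' (k n : ℕ) : SimpleGraph (Fin n) where
  Adj u v := u ≠ v ∧ (u : ℕ) / k = (v : ℕ) / k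
  symm := by constructor; rintro u v ⟨h1, h2⟩; exact ⟨h1.symm, h2.symm⟩
  loopless := by constructor; rintro u ⟨h, -⟩; exact h rfl

/-- `G` is `d`-degenerate: every nonempty set of vertices contains a vertex with at most `d`
neighbors inside the set. -/
def Degenerate {V : Type*} (G : SimpleGraph V) (d : ℕ) : Prop :=
  ∀ s : Set V, s.Nonempty → ∃ v ∈ s, {u ∈ s | G.Adj v u}.ncard ≤ d

/-- The degeneracy of `G`: the least `d` such that `G` is `d`-degenerate. -/
noncomputable def degeneracy {V : Type*} (G : SimpleGraph V) : ℕ :=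
  sInf {d | Degenerate G d}

/-- The number of edges of `K_N` receiving color `c` under the coloring `col`. -/
noncomputable def colorEdgeCount {N : ℕ} (col : Sym2 (Fin N) → Bool) (c : Bool) : ℕ :=
  {e : Sym2 (Fin N) | ¬ e.IsDiag ∧ col e = c}.ncard

/-- The set of vertices joined to `v` by an edge of color `c`. -/
def colorNbr {N : ℕ} (col : Sym2 (Fin N) → Bool) (c : Bool) (v : Fin N) : Finset (Fin N) :=
  Finset.univ.filter fun u => u ≠ v ∧ col s(v, u) = c

/-!
Take `k = ⌊log₂ n⌋ / 2`, `G = Ggraph k n` and `v` its apex. Deleting `v` leaves `K_k` plus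
isolated vertices; as `n ≥ 4 ^ k ≥ (2k choose k)`, the Erdős–Szekeres bound gives a monochromatic
`K_k` in every two-coloring of `K_n`, and any such clique extends to a copy of `G - v`, so
`r(G - v) = n`. For the lower bound, split `k n` vertices into `k` blocks of size `n` and color an
edge `true` iff it lies inside a block. Because of the apex, a `true` copy of `G` would fit in one
block, which has fewer than `n + 1` vertices; the `false` graph is `k`-partite while `G` contains
`K_{k+1}`. Hence `r(G) > k n > n log₂ n / 3`.
-/

open SimpleGraph

def colorGraph {V : Type*} (col : Sym2 V → Bool) (c : Bool) : SimpleGraph V :=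
  fromEdgeSet {e | col e = c}

@[simp]
lemma colorGraph_adj {V : Type*} {col : Sym2 V → Bool} {c : Bool} {u v : V} :
    (colorGraph col c).Adj u v ↔ col s(u, v) = c ∧ u ≠ v :=
  fromEdgeSet_adj _

lemma compl_colorGraph {V : Type*} (col : Sym2 V → Bool) (c : Bool) :
    (colorGraph col c)ᶜ = colorGraph col (!c) := by
  ext u v
  cases c <;> simp [and_comm] <;> tauto

lemma hasMonoCopy_iff_isContained {V : Type*} {N : ℕ} {G : SimpleGraph V}
    {col : Sym2 (Fin N) → Bool} {c : Bool} :
    HasMonoCopy G col c ↔ G ⊑ colorGraph col c := by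
  constructor
  · rintro ⟨f, hf, hcol⟩
    exact ⟨⟨⟨f, fun huv => colorGraph_adj.2 ⟨hcol _ _ huv, hf.ne huv.ne⟩⟩, hf⟩⟩
  · rintro ⟨f⟩
    exact ⟨f, f.injective, fun u v huv => (colorGraph_adj.1 (f.toHom.map_adj huv)).1⟩

namespace SimpleGraph

theorem exists_isNClique_or_isNClique_compl {V : Type*} (G : SimpleGraph V) :
    ∀ (s t : ℕ) (S : Finset V), (s + t).choose s ≤ #S →
      (∃ A ⊆ S, G.IsNClique s A) ∨ ∃ A ⊆ S, Gᶜ.IsNClique t A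
  | 0, _, _, _ => .inl ⟨∅, empty_subset _, by simp⟩
  | _ + 1, 0, _, _ => .inr ⟨∅, empty_subset _, by simp⟩
  | s + 1, t + 1, S, hS => by
    classical
    obtain ⟨v, hv⟩ : S.Nonempty := card_pos.1 ((Nat.choose_pos (by omega)).trans_le hS)
    set Nbr := (S.erase v).filter (G.Adj v)
    set NonNbr := (S.erase v).filter (¬ G.Adj v ·)
    have hsplit : #Nbr + #NonNbr + 1 = #S := by
      rw [card_filter_add_card_filter_not, card_erase_add_one hv]
    have hpascal : (s + 1 + (t + 1)).choose (s + 1)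
        = (s + (t + 1)).choose s + (s + 1 + t).choose (s + 1) := by
      rw [show s + 1 + (t + 1) = s + (t + 1) + 1 by ring, show s + 1 + t = s + (t + 1) by ring]
      exact Nat.choose_succ_succ _ _
    have hNbr : Nbr ⊆ S := (filter_subset _ _).trans (erase_subset _ _)
    have hNonNbr : NonNbr ⊆ S := (filter_subset _ _).trans (erase_subset _ _)
    by_cases hbig : (s + (t + 1)).choose s ≤ #Nbr
    · rcases exists_isNClique_or_isNClique_compl G s (t + 1) Nbr hbig with
        ⟨A, hA, hclique⟩ | ⟨A, hA, hclique⟩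
      · refine .inl ⟨insert v A, insert_subset hv (hA.trans hNbr), hclique.insert fun b hb => ?_⟩
        exact (mem_filter.1 (hA hb)).2
      · exact .inr ⟨A, hA.trans hNbr, hclique⟩
    · rcases exists_isNClique_or_isNClique_compl G (s + 1) t NonNbr (by omega) with
        ⟨A, hA, hclique⟩ | ⟨A, hA, hclique⟩
      · exact .inl ⟨A, hA.trans hNonNbr, hclique⟩
      · refine .inr ⟨insert v A, insert_subset hv (hA.trans hNonNbr), hclique.insert fun b hb => ?_⟩
        obtain ⟨hbS, hnadj⟩ := mem_filter.1 (hA hb)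
        exact (compl_adj G v b).2 ⟨(ne_of_mem_erase hbS).symm, hnadj⟩
termination_by s t => s + t

end SimpleGraph

/-- The arrow relation `N → (G)`. -/
def Arrows {V : Type*} (N : ℕ) (G : SimpleGraph V) : Prop :=
  ∀ col : Sym2 (Fin N) → Bool, ∃ c, HasMonoCopy G col c

section Arrows

variable {V W : Type*} {G : SimpleGraph V} {N M : ℕ}

lemma Arrows.mono (h : Arrows N G) (hNM : N ≤ M) : Arrows M G := by
  intro col
  obtain ⟨c, f, hf, hcol⟩ := h (fun e => col (e.map (Fin.castLE hNM)))
  exact ⟨c, Fin.castLE hNM ∘ f, (Fin.castLE_injective hNM).comp hf, hcol⟩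

lemma Arrows.card_le [Fintype V] (h : Arrows N G) : Fintype.card V ≤ N := by
  obtain ⟨-, f, hf, -⟩ := h fun _ => true
  simpa using Fintype.card_le_of_injective f hf

lemma Arrows.of_isContained {G' : SimpleGraph W} (h : Arrows N G) (hG : G' ⊑ G) :
    Arrows N G' := fun col =>
  let ⟨c, hc⟩ := h col
  ⟨c, hasMonoCopy_iff_isContained.2 (hG.trans (hasMonoCopy_iff_isContained.1 hc))⟩

lemma arrows_completeGraph {k : ℕ} (hN : (k + k).choose k ≤ N) :
    Arrows N (completeGraph (Fin k)) := by
  intro col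
  rcases (colorGraph col true).exists_isNClique_or_isNClique_compl k k univ
      (by simpa using hN) with ⟨A, -, hA⟩ | ⟨A, -, hA⟩
  · exact ⟨true, hasMonoCopy_iff_isContained.2
      ((not_cliqueFree_iff_top_isContained _).1 hA.not_cliqueFree)⟩
  · rw [compl_colorGraph] at hA
    exact ⟨false, hasMonoCopy_iff_isContained.2
      ((not_cliqueFree_iff_top_isContained _).1 hA.not_cliqueFree)⟩

lemma exists_arrows [Fintype V] (G : SimpleGraph V) : ∃ N, Arrows N G :=
  ⟨_, (arrows_completeGraph le_rfl).of_isContained <|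
    (IsContained.of_le le_top).trans (Iso.completeGraph (Fintype.equivFin V)).isContained⟩

lemma arrows_ramsey [Fintype V] (G : SimpleGraph V) : Arrows (ramsey G) G :=
  Nat.sInf_mem (s := {N | Arrows N G}) (exists_arrows G)

lemma card_le_ramsey [Fintype V] (G : SimpleGraph V) : Fintype.card V ≤ ramsey G :=
  (arrows_ramsey G).card_le

lemma ramsey_mono [Fintype V] {G' : SimpleGraph W} (hG : G' ⊑ G) : ramsey G' ≤ ramsey G :=
  Nat.sInf_le ((arrows_ramsey G).of_isContained hG)

lemma lt_ramsey_of_not_arrows [Fintype V] (h : ¬ Arrows N G) : N < ramsey G :=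
  lt_of_not_ge fun hle => h ((arrows_ramsey G).mono hle)

lemma ramsey_eq_card_of_arrows [Fintype V] (h : Arrows (Fintype.card V) G) :
    ramsey G = Fintype.card V :=
  le_antisymm (Nat.sInf_le h) (card_le_ramsey G)

end Arrows

lemma hgraph_isContained {W : Type*} [Fintype W] {H : SimpleGraph W} {k n : ℕ} (hkn : k ≤ n)
    (hK : completeGraph (Fin k) ⊑ H) (hn : n ≤ Fintype.card W) : Hgraph k n ⊑ H := by
  classical
  -- Extend the clique embedding, placed on `{i | i < k}`, to a bijection onto a superset `t`.
  obtain ⟨φ⟩ := hK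
  obtain ⟨t, hφt, -, htn⟩ := exists_subsuperset_card_eq (subset_univ (univ.map φ.toEmbedding))
    (by simpa using hkn) (by simpa using hn)
  let ψ : Fin n ↪ W := (Fin.castLEEmb hn).trans (Fintype.equivFin W).symm.toEmbedding
  let f : Fin n → W := fun i => if h : (i : ℕ) < k then φ ⟨i, h⟩ else ψ i
  have hf : ∀ (i : Fin n) (h : (i : ℕ) < k), f i = φ ⟨i, h⟩ := fun i h => dif_pos h
  obtain ⟨e, he⟩ := Set.MapsTo.exists_equiv_extend_of_card_eq (t := t)
    (s := {i : Fin n | (i : ℕ) < k}) (f := f) (by simp [htn])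
    (fun i hi => by rw [hf i hi]; exact hφt (mem_map_of_mem _ (mem_univ _)))
    (fun i hi j hj hij => by
      rw [hf i hi, hf j hj] at hij
      simpa [Fin.ext_iff] using φ.injective hij)
  refine ⟨⟨⟨fun i => e i, ?_⟩, Subtype.val_injective.comp e.injective⟩⟩
  rintro u v ⟨huv, hu, hv⟩
  rw [he u hu, he v hv, hf u hu, hf v hv]
  exact φ.toHom.map_adj (by simpa [Fin.ext_iff] using huv)

lemma ramsey_hgraph {k n : ℕ} (h : Arrows n (completeGraph (Fin k))) : ramsey (Hgraph k n) = n := by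
  have hkn : k ≤ n := by simpa using h.card_le
  have harrows : Arrows (Fintype.card (Fin n)) (Hgraph k n) := by
    rw [Fintype.card_fin]
    intro col
    obtain ⟨c, hc⟩ := h col
    exact ⟨c, hasMonoCopy_iff_isContained.2 <|
      hgraph_isContained hkn (hasMonoCopy_iff_isContained.1 hc) (by simp)⟩
  simpa using ramsey_eq_card_of_arrows harrows

lemma top_isContained_ggraph {k n : ℕ} (hkn : k ≤ n) :
    completeGraph (Fin (k + 1)) ⊑ Ggraph k n := by
  let φ : Fin (k + 1) → Fin (n + 1) := fun i => ⟨if (i : ℕ) = k then n else i, by split <;> omega⟩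
  have hφ : ∀ i, (φ i : ℕ) = if (i : ℕ) = k then n else i := fun _ => rfl
  have hinj : Function.Injective φ := fun i j hij => by
    have := Fin.val_eq_of_eq hij
    rw [hφ, hφ] at this
    ext
    split at this <;> split at this <;> omega
  have hadj : ∀ {i j}, i ≠ j → (Ggraph k n).Adj (φ i) (φ j) := fun {i j} hij => by
    have := Fin.val_ne_of_ne hij
    refine ⟨hinj.ne hij, ?_⟩
    rw [hφ, hφ]
    split <;> split <;> omega
  exact ⟨Hom.toCopy ⟨φ, hadj⟩ hinj⟩

lemma induce_ggraph_isContained {k n : ℕ} :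
    (Ggraph k n).induce {u | u ≠ Fin.last n} ⊑ Hgraph k n := by
  let ψ : {u : Fin (n + 1) | u ≠ Fin.last n} → Fin n := fun u => u.1.castPred u.2
  have hinj : Function.Injective ψ := fun u v huv => Subtype.ext (Fin.castPred_inj.1 huv)
  have hadj : ∀ {u v}, ((Ggraph k n).induce {u | u ≠ Fin.last n}).Adj u v →
      (Hgraph k n).Adj (ψ u) (ψ v) := fun {u v} ⟨hne, hcase⟩ => by
    have hcase : (u.1 : ℕ) = n ∨ (v.1 : ℕ) = n ∨ ((u.1 : ℕ) < k ∧ (v.1 : ℕ) < k) := hcase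
    have hu : (u.1 : ℕ) < n := Fin.val_lt_last u.2
    have hv : (v.1 : ℕ) < n := Fin.val_lt_last v.2
    refine ⟨hinj.ne fun h => hne (congrArg Subtype.val h), ?_, ?_⟩ <;>
      simp only [ψ, Fin.coe_castPred] <;> omega
  exact ⟨Hom.toCopy ⟨ψ, hadj⟩ hinj⟩

def blockColoring (N n : ℕ) : Sym2 (Fin N) → Bool :=
  Sym2.lift ⟨fun u v => decide ((u : ℕ) / n = v / n), fun u v => by simp [eq_comm]⟩

lemma colorable_colorGraph_blockColoring_false (k n : ℕ) :
    (colorGraph (blockColoring (n * k) n) false).Colorable k :=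
  ⟨Coloring.mk (fun u => ⟨u / n, Nat.div_lt_of_lt_mul u.2⟩) fun {u v} huv => by
    simpa [blockColoring, Fin.ext_iff] using (colorGraph_adj.1 huv).1⟩

lemma card_le_of_isContained_colorGraph_blockColoring_true {V : Type*} [Fintype V]
    {G : SimpleGraph V} {N n : ℕ} (hn : 0 < n) (a : V) (ha : ∀ u ≠ a, G.Adj a u)
    (h : G ⊑ colorGraph (blockColoring N n) true) : Fintype.card V ≤ n := by
  obtain ⟨f⟩ := h
  have hblock : ∀ u, (f u : ℕ) / n = (f a : ℕ) / n := fun u => by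
    by_cases hu : u = a
    · rw [hu]
    · have hadj := colorGraph_adj.1 (f.toHom.map_adj (ha u hu))
      simp only [blockColoring, Sym2.lift_mk, decide_eq_true_eq] at hadj
      exact hadj.1.symm
  have hinj : Function.Injective fun u => (⟨f u % n, Nat.mod_lt _ hn⟩ : Fin n) := fun u v huv => by
    apply f.injective
    simp only [Copy.toHom_apply, Fin.ext_iff] at huv ⊢
    rw [← Nat.div_add_mod (f u : ℕ) n, ← Nat.div_add_mod (f v : ℕ) n, hblock u, hblock v]
    simpa using huv
  simpa using Fintype.card_le_of_injective _ hinj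

lemma not_arrows_ggraph {k n : ℕ} (hkn : k ≤ n) (hn : 0 < n) : ¬ Arrows (n * k) (Ggraph k n) := by
  intro h
  obtain ⟨c, hc⟩ := h (blockColoring (n * k) n)
  rw [hasMonoCopy_iff_isContained] at hc
  cases c with
  | false =>
    exact (not_cliqueFree_iff_top_isContained _).2 ((top_isContained_ggraph hkn).trans hc)
      ((colorable_colorGraph_blockColoring_false k n).cliqueFree k.lt_succ_self)
  | true =>
    have := card_le_of_isContained_colorGraph_blockColoring_true hn (G := Ggraph k n) (Fin.last n)
      (fun u hu => ⟨hu.symm, Or.inl rfl⟩) hc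
    simp at this

lemma logb_two_lt_three_mul_half_log {n : ℕ} (hk : 2 ≤ Nat.log 2 n / 2) :
    Real.logb 2 n < 3 * (Nat.log 2 n / 2 : ℕ) :=
  calc Real.logb 2 n < Nat.log 2 n + 1 := by
        have hfloor := Real.natFloor_logb_natCast 2 n
        rw [Nat.cast_ofNat] at hfloor
        exact hfloor ▸ Nat.lt_floor_add_one _
    _ ≤ 3 * (Nat.log 2 n / 2 : ℕ) := by
        exact_mod_cast (by omega : Nat.log 2 n + 1 ≤ 3 * (Nat.log 2 n / 2))

theorem exists_vertex_deletion_superconstant (n : ℕ) (hn : 16 ≤ n) :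
    ∃ (G : SimpleGraph (Fin (n + 1))) (v : Fin (n + 1)),
      (1 / 3 : ℝ) * n * Real.logb 2 n < ramsey G ∧
      ramsey (G.induce {u | u ≠ v}) = n := by
  set k := Nat.log 2 n / 2
  have hlog : 4 ≤ Nat.log 2 n := Nat.le_log_of_pow_le (by norm_num) (by omega)
  have hpow : 2 ^ (k + k) ≤ n :=
    (Nat.pow_le_pow_right two_pos (by omega)).trans (Nat.pow_log_le_self 2 (by omega))
  have hkn : k ≤ n := (Nat.le_add_right k k).trans (Nat.lt_two_pow_self.le.trans hpow)
  have hramsey_hgraph : ramsey (Hgraph k n) = n :=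
    ramsey_hgraph (arrows_completeGraph ((Nat.choose_le_two_pow _ _).trans hpow))
  refine ⟨Ggraph k n, Fin.last n, ?_, le_antisymm ?_ ?_⟩
  · calc (1 / 3 : ℝ) * n * Real.logb 2 n < 1 / 3 * n * (3 * k) := by
          gcongr; exact logb_two_lt_three_mul_half_log (by omega)
      _ = (n * k : ℕ) := by push_cast; ring
      _ < ramsey (Ggraph k n) := by
          exact_mod_cast lt_ramsey_of_not_arrows (not_arrows_ggraph hkn (by omega))
  · exact (ramsey_mono induce_ggraph_isContained).trans_eq hramsey_hgraph
  · simpa [Finset.filter_ne'] using card_le_ramsey ((Ggraph k n).induce {u | u ≠ Fin.last n})
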